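/- Let k₁, k₂ be integers with k₁ ≠ k₂. Then ∫_{−π}^{π} sin((k₁+k₂)η/2) · sin((k₁−k₂)η/2) / ((k₁−k₂) sin²(η/2)) dη = 2π · min(|k₁−k₂|, |k₁+k₂|) · sgn(k₁+k₂) / |k₁−k₂|. -/
import Mathlib

open Real intervalIntegral
open Finset MeasureTheory

lemma cos_int_integral (p : ℤ) :
    ∫ η in (-π)..π, Real.cos ((p:ℝ) * η) = if p = 0 then 2*π else 0 := by
  by_cases hp : p = 0
  · simp [hp, two_mul]
  · have hp' : (p:ℝ) ≠ 0 := Int.cast_ne_zero.mpr hp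
    rw [if_neg hp, intervalIntegral.integral_comp_mul_left Real.cos hp', integral_cos]
    have h1 : Real.sin ((p:ℝ)*π) = 0 := Real.sin_int_mul_pi p
    have h2 : Real.sin ((p:ℝ)*(-π)) = 0 := by
      rw [mul_neg, Real.sin_neg, h1, neg_zero]
    rw [h1, h2]; simp

lemma sin_nat_mul (m : ℕ) (θ : ℝ) :
    Real.sin (m * θ) = Real.sin θ * ∑ j ∈ Finset.range m, Real.cos (((m:ℝ) - 1 - 2*j) * θ) := by
  have key : ∀ j ∈ Finset.range m, Real.sin θ * Real.cos (((m:ℝ) - 1 - 2*j) * θ)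
      = Real.sin (((m:ℝ) - 2*j) * θ)/2 - Real.sin (((m:ℝ) - 2*(j+1:ℕ)) * θ)/2 := by
    intro j _
    have e1 : ((m:ℝ) - 2*j) * θ = (((m:ℝ) - 1 - 2*j) * θ) + θ := by ring
    have e2 : ((m:ℝ) - 2*(j+1:ℕ)) * θ = (((m:ℝ) - 1 - 2*j) * θ) - θ := by push_cast; ring
    rw [e1, e2, Real.sin_add, Real.sin_sub]; ring
  rw [Finset.mul_sum, Finset.sum_congr rfl key, Finset.sum_range_sub' (fun j => Real.sin (((m:ℝ) - 2*j) * θ)/2)]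
  have e3 : ((m:ℝ) - 2*(0:ℕ)) * θ = m*θ := by push_cast; ring
  have e4 : ((m:ℝ) - 2*(m:ℕ)) * θ = -(m*θ) := by push_cast; ring
  rw [e3, e4, Real.sin_neg]; ring

lemma count_lemma (m n k : ℕ) (hk : m + n = 2*k) :
    ((Finset.range m ×ˢ Finset.range n).filter (fun p => p.1 + p.2 + 1 = k)).card = min m n := by
  have himg : ((Finset.range m ×ˢ Finset.range n).filter (fun p => p.1 + p.2 + 1 = k))
      = (Finset.Ico (k - n) (min m k)).image (fun j => (j, k - 1 - j)) := by
    ext ⟨j, l⟩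
    simp only [Finset.mem_filter, Finset.mem_product, Finset.mem_image, Finset.mem_Ico,
      Finset.mem_range, Prod.mk.injEq]
    constructor
    · rintro ⟨⟨hj, hl⟩, hc⟩
      exact ⟨j, by omega, rfl, by omega⟩
    · rintro ⟨j', ⟨h1, h2⟩, rfl, rfl⟩
      omega
  rw [himg, Finset.card_image_of_injective _ (fun a b hab => congrArg Prod.fst hab),
    Nat.card_Ico]
  omega

lemma sin_half_ne (x : ℝ) (h1 : -π < x) (h2 : x ≤ π) (h0 : x ≠ 0) : Real.sin (x/2) ≠ 0 := by
  rcases lt_or_gt_of_ne h0 with hx | hx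
  · have : Real.sin (-(x/2)) > 0 := by
      apply Real.sin_pos_of_pos_of_lt_pi (by linarith) (by nlinarith [Real.pi_pos])
    rw [Real.sin_neg] at this; linarith
  · have : Real.sin (x/2) > 0 :=
      Real.sin_pos_of_pos_of_lt_pi (by linarith) (by nlinarith [Real.pi_pos])
    linarith

lemma ae_ne_zero : ∀ᵐ x : ℝ, x ≠ 0 := by
  have h0 : (MeasureTheory.volume : MeasureTheory.Measure ℝ) {0} = 0 :=
    MeasureTheory.measure_singleton 0
  rw [MeasureTheory.ae_iff]
  convert h0 using 2
  ext x; simp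

lemma term_integral (c d : ℝ) (p q : ℤ)
    (hp : ∀ η : ℝ, ((p:ℝ))*η = c*(η/2) + d*(η/2)) (hq : ∀ η : ℝ, ((q:ℝ))*η = c*(η/2) - d*(η/2)) :
    ∫ η in (-π)..π, Real.cos (c*(η/2)) * Real.cos (d*(η/2))
      = ((if p = 0 then 2*π else 0) + (if q = 0 then 2*π else 0))/2 := by
  have key : ∀ η : ℝ, Real.cos (c*(η/2)) * Real.cos (d*(η/2))
      = (Real.cos ((p:ℝ)*η) + Real.cos ((q:ℝ)*η))/2 := by
    intro η
    rw [hp η, hq η, Real.cos_add, Real.cos_sub]; ring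
  rw [intervalIntegral.integral_congr (g := fun η => (Real.cos ((p:ℝ)*η) + Real.cos ((q:ℝ)*η))/2)
    (fun x _ => key x)]
  rw [intervalIntegral.integral_div, intervalIntegral.integral_add
    ((by fun_prop : Continuous fun x : ℝ => Real.cos ((p:ℝ)*x)).intervalIntegrable _ _)
    ((by fun_prop : Continuous fun x : ℝ => Real.cos ((q:ℝ)*x)).intervalIntegrable _ _)]
  have e1 : ∫ η in (-π)..π, Real.cos ((p:ℝ)*η) = if p = 0 then 2*π else 0 := by
    by_cases hp0 : p = 0
    · simp [hp0, two_mul]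
    · have hp' : (p:ℝ) ≠ 0 := Int.cast_ne_zero.mpr hp0
      rw [if_neg hp0, intervalIntegral.integral_comp_mul_left Real.cos hp', integral_cos]
      have h1 : Real.sin ((p:ℝ)*π) = 0 := Real.sin_int_mul_pi p
      have h2 : Real.sin ((p:ℝ)*(-π)) = 0 := by rw [mul_neg, Real.sin_neg, h1, neg_zero]
      rw [h1, h2]; simp
  have e2 : ∫ η in (-π)..π, Real.cos ((q:ℝ)*η) = if q = 0 then 2*π else 0 := by
    by_cases hq0 : q = 0
    · simp [hq0, two_mul]
    · have hq' : (q:ℝ) ≠ 0 := Int.cast_ne_zero.mpr hq0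
      rw [if_neg hq0, intervalIntegral.integral_comp_mul_left Real.cos hq', integral_cos]
      have h1 : Real.sin ((q:ℝ)*π) = 0 := Real.sin_int_mul_pi q
      have h2 : Real.sin ((q:ℝ)*(-π)) = 0 := by rw [mul_neg, Real.sin_neg, h1, neg_zero]
      rw [h1, h2]; simp
  rw [e1, e2]

lemma work (m n k : ℕ) (hk : m + n = 2*k) :
    ∫ η in (-π)..π, Real.sin ((m:ℝ)*η/2) * Real.sin ((n:ℝ)*η/2) / Real.sin (η/2)^2
      = 2*π*(min m n : ℕ) := by
  have hkR : (m:ℝ) + n = 2*k := by exact_mod_cast hk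
  have hae : ∀ᵐ x : ℝ, x ∈ Set.uIoc (-π) π →
      Real.sin ((m:ℝ)*x/2) * Real.sin ((n:ℝ)*x/2) / Real.sin (x/2)^2
      = (∑ j ∈ range m, Real.cos (((m:ℝ)-1-2*j)*(x/2)))
        * (∑ l ∈ range n, Real.cos (((n:ℝ)-1-2*l)*(x/2))) := by
    filter_upwards [ae_ne_zero] with x hx hmem
    have hIoc : x ∈ Set.Ioc (-π) π := by
      rwa [Set.uIoc_of_le (by linarith [Real.pi_pos])] at hmem
    have hs := sin_half_ne x hIoc.1 hIoc.2 hx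
    have em : (m:ℝ)*x/2 = (m:ℝ)*(x/2) := by ring
    have en : (n:ℝ)*x/2 = (n:ℝ)*(x/2) := by ring
    rw [em, en, sin_nat_mul m (x/2), sin_nat_mul n (x/2)]
    field_simp
  rw [intervalIntegral.integral_congr_ae hae]
  simp only [Finset.sum_mul_sum]
  have hstep := intervalIntegral.integral_finset_sum (μ := MeasureTheory.volume) (a := -π) (b := π)
    (s := range m)
    (f := fun j x => ∑ l ∈ range n,
      Real.cos (((m:ℝ)-1-2*j)*(x/2)) * Real.cos (((n:ℝ)-1-2*l)*(x/2)))
    (fun j _ => ((continuous_finset_sum _ (fun l _ => by fun_prop) :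
      Continuous fun x : ℝ => ∑ l ∈ range n,
        Real.cos (((m:ℝ)-1-2*j)*(x/2)) * Real.cos (((n:ℝ)-1-2*l)*(x/2)))).intervalIntegrable _ _)
  rw [hstep]
  have hterm : ∀ j ∈ range m, (∫ x in (-π)..π, ∑ l ∈ range n,
      Real.cos (((m:ℝ)-1-2*j)*(x/2)) * Real.cos (((n:ℝ)-1-2*l)*(x/2)))
      = ∑ l ∈ range n,
        ((if ((k:ℤ)-1-j-l) = 0 then 2*π else 0) + (if ((k:ℤ)-(n:ℤ)-j+l) = 0 then 2*π else 0))/2 := by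
    intro j _
    have hstep2 := intervalIntegral.integral_finset_sum (μ := MeasureTheory.volume) (a := -π)
      (b := π) (s := range n)
      (f := fun l x => Real.cos (((m:ℝ)-1-2*j)*(x/2)) * Real.cos (((n:ℝ)-1-2*l)*(x/2)))
      (fun l _ => ((by fun_prop : Continuous fun x : ℝ =>
        Real.cos (((m:ℝ)-1-2*j)*(x/2)) * Real.cos (((n:ℝ)-1-2*l)*(x/2)))).intervalIntegrable _ _)
    rw [hstep2]
    refine Finset.sum_congr rfl (fun l _ => ?_)
    apply term_integral
    · intro η; push_cast; linear_combination (-η/2) * hkR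
    · intro η; push_cast; linear_combination (-η/2) * hkR
  rw [Finset.sum_congr rfl hterm]
  have hsplit : ∀ (j l : ℕ),
      ((if ((k:ℤ)-1-j-l) = 0 then 2*π else 0) + (if ((k:ℤ)-(n:ℤ)-j+l) = 0 then 2*π else 0))/2
      = (if ((k:ℤ)-1-j-l) = 0 then π else 0) + (if ((k:ℤ)-(n:ℤ)-j+l) = 0 then π else 0) := by
    intro j l; split_ifs <;> ring
  simp only [hsplit]
  simp only [Finset.sum_add_distrib]
  have hrefl : ∀ j ∈ range m,
      (∑ l ∈ range n, if ((k:ℤ)-(n:ℤ)-j+l) = 0 then π else 0)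
      = ∑ l ∈ range n, if ((k:ℤ)-1-j-l) = 0 then π else 0 := by
    intro j _
    rw [← Finset.sum_range_reflect (fun l => if ((k:ℤ)-1-(j:ℤ)-(l:ℤ)) = 0 then π else 0) n]
    refine Finset.sum_congr rfl (fun l hl => ?_)
    rw [Finset.mem_range] at hl
    have hcast : ((n - 1 - l : ℕ) : ℤ) = (n:ℤ) - 1 - l := by omega
    rw [hcast]
    exact if_congr (by constructor <;> intro <;> omega) rfl rfl
  have hmain : (∑ j ∈ range m, ∑ l ∈ range n, if ((k:ℤ)-1-j-l) = 0 then π else 0)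
      = π * (min m n : ℕ) := by
    rw [← Finset.sum_product']
    have hcond : ∀ p ∈ range m ×ˢ range n,
        (if ((k:ℤ)-1-p.1-p.2) = 0 then π else 0) = (if p.1+p.2+1 = k then π else 0) :=
      fun p _ => if_congr (by omega) rfl rfl
    rw [Finset.sum_congr rfl hcond, ← Finset.sum_filter, Finset.sum_const,
      count_lemma m n k hk, nsmul_eq_mul]
    ring
  rw [Finset.sum_congr rfl hrefl, hmain]
  ring

lemma sin_int_mul' (M : ℤ) (x : ℝ) :
    Real.sin ((M:ℝ) * x) = ((M.sign : ℤ):ℝ) * Real.sin ((M.natAbs : ℝ) * x) := by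
  have hcast : ((M.natAbs : ℕ) : ℝ) = |(M:ℝ)| := by
    rw [Nat.cast_natAbs]; exact Int.cast_abs ..
  rw [hcast]
  rcases lt_trichotomy M 0 with hM | hM | hM
  · rw [Int.sign_eq_neg_one_iff_neg.2 hM, abs_of_neg (by exact_mod_cast hM : (M:ℝ) < 0)]
    push_cast
    rw [show (-(M:ℝ))*x = -((M:ℝ)*x) by ring, Real.sin_neg]; ring
  · subst hM; simp
  · rw [Int.sign_eq_one_iff_pos.2 hM, abs_of_pos (by exact_mod_cast hM : (0:ℝ) < (M:ℝ))]
    push_cast; ring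

/-- Exact evaluation of the integral `I'₁`: for integers `k₁ ≠ k₂`,
`∫_{−π}^{π} sin((k₁+k₂)η/2)·sin((k₁−k₂)η/2)/((k₁−k₂)·sin²(η/2)) dη
 = 2π · min(|k₁−k₂|,|k₁+k₂|) · sgn(k₁+k₂) / |k₁−k₂|`. -/
theorem I1'_eq (k₁ k₂ : ℤ) (h : k₁ ≠ k₂) :
    ∫ η in (-π)..π,
        Real.sin (((k₁ + k₂ : ℤ) : ℝ) * η / 2) * Real.sin (((k₁ - k₂ : ℤ) : ℝ) * η / 2) /
          (((k₁ - k₂ : ℤ) : ℝ) * Real.sin (η / 2) ^ 2)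
      = 2 * π * ((min |k₁ - k₂| |k₁ + k₂| : ℤ) : ℝ) * ((Int.sign (k₁ + k₂) : ℤ) : ℝ) /
          ((|k₁ - k₂| : ℤ) : ℝ) := by
  set M := k₁ + k₂ with hMdef
  set N := k₁ - k₂ with hNdef
  have hN0 : N ≠ 0 := sub_ne_zero.mpr h
  set a := M.natAbs with hadef
  set b := N.natAbs with hbdef
  have hb0 : b ≠ 0 := Int.natAbs_ne_zero.mpr hN0
  have h2k : M + N = 2*k₁ := by rw [hMdef, hNdef]; ring
  obtain ⟨k, hk⟩ : ∃ k, a + b = 2*k := ⟨(a+b)/2, by omega⟩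
  have hpt : ∀ η : ℝ,
      Real.sin ((M:ℝ) * η / 2) * Real.sin ((N:ℝ) * η / 2) / ((N:ℝ) * Real.sin (η/2)^2)
      = (((M.sign:ℤ):ℝ) * ((N.sign:ℤ):ℝ) / (N:ℝ)) *
        (Real.sin ((a:ℝ)*η/2) * Real.sin ((b:ℝ)*η/2) / Real.sin (η/2)^2) := by
    intro η
    have e1 : (M:ℝ)*η/2 = (M:ℝ)*(η/2) := by ring
    have e2 : (N:ℝ)*η/2 = (N:ℝ)*(η/2) := by ring
    have e3 : (a:ℝ)*(η/2) = (a:ℝ)*η/2 := by ring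
    have e4 : (b:ℝ)*(η/2) = (b:ℝ)*η/2 := by ring
    rw [e1, e2, sin_int_mul' M (η/2), sin_int_mul' N (η/2), e3, e4]
    rw [show (((M.sign:ℤ):ℝ) * Real.sin ((a:ℝ)*η/2)) * (((N.sign:ℤ):ℝ) * Real.sin ((b:ℝ)*η/2))
      = (((M.sign:ℤ):ℝ) * ((N.sign:ℤ):ℝ)) * (Real.sin ((a:ℝ)*η/2) * Real.sin ((b:ℝ)*η/2)) from by
        ring, mul_div_mul_comm]
  simp only [hpt]
  rw [intervalIntegral.integral_const_mul, work a b k hk]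
  have hsZ : N.sign ≠ 0 := fun hh => hN0 (Int.sign_eq_zero_iff_zero.mp hh)
  have hsN0 : ((N.sign:ℤ):ℝ) ≠ 0 := Int.cast_ne_zero.mpr hsZ
  have hbR : ((b:ℕ):ℝ) ≠ 0 := Nat.cast_ne_zero.mpr hb0
  have habsN : |N| = (b:ℤ) := Int.abs_eq_natAbs N
  have hNr : (N:ℝ) = ((N.sign:ℤ):ℝ) * (b:ℝ) := by
    rw [show ((b:ℕ):ℝ) = ((|N|:ℤ):ℝ) by exact_mod_cast congrArg (fun z : ℤ => (z:ℝ)) habsN.symm]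
    rw [← Int.cast_mul, Int.sign_mul_abs]
  have habsM : |M| = (a:ℤ) := Int.abs_eq_natAbs M
  rw [habsN, habsM, hNr]
  rw [mul_comm ((M.sign:ℤ):ℝ) ((N.sign:ℤ):ℝ), mul_div_mul_left _ _ hsN0]
  push_cast
  rw [min_comm ((b:ℕ):ℝ) ((a:ℕ):ℝ)]
  ring
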